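/- Let n ≥ 1, κ > 0, g ∈ (0,∞)ⁿ, and u, v ∈ ℝⁿ. Define G(α, β) = κ·KL(β | g⊙α) for α, β ∈ [0,∞)ⁿ, where (g⊙α)ᵢ = gᵢ·αᵢ. Then sup{⟨u,α⟩ + ⟨v,β⟩ − G(α,β) : α, β ∈ [0,∞)ⁿ} equals 0 if uᵢ ≤ κ·gᵢ·(1 − exp(vᵢ/κ)) for every i, and equals +∞ otherwise. -/

import Mathlib

open scoped ENNReal NNReal Classical BigOperators

/-- The generalized Kullback–Leibler term `a·log(a/b) − a + b` for `a, b ≥ 0`, with the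
conventions `0·log(0/b) = 0` for `b ≥ 0` and `a·log(a/0) = +∞` for `a > 0`. -/
noncomputable def klTerm (a b : ℝ≥0) : EReal :=
  if a = 0 then ((b : ℝ) : EReal)
  else if b = 0 then ⊤
  else (((a : ℝ) * Real.log ((a : ℝ) / (b : ℝ)) - (a : ℝ) + (b : ℝ) : ℝ) : EReal)

/-!
For fixed `α`, maximizing over `β` decouples into coordinates and is the Fenchel–Young duality
between the entropy and the exponential: with `c = gᵢ αᵢ`,
`sup_{b ≥ 0} (x b − (b log(b/c) − b + c)) = c (eˣ − 1)`, attained at `b = c eˣ`.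
Taking `x = vᵢ/κ`, the conjugate becomes the supremum over `α ≥ 0` of the linear form
`Σᵢ αᵢ (uᵢ − κ gᵢ (1 − exp(vᵢ/κ)))`, which is `0` if all coefficients are nonpositive and `+∞`
otherwise.
-/

open Real

theorem EReal.coe_finset_sum {ι : Type*} (s : Finset ι) (f : ι → ℝ) :
    ((∑ i ∈ s, f i : ℝ) : EReal) = ∑ i ∈ s, (f i : EReal) :=
  map_sum (⟨⟨(↑), coe_zero⟩, coe_add⟩ : ℝ →+ EReal) f s

theorem mul_sub_exp_le_kl (x : ℝ) {b c : ℝ} (hb : 0 ≤ b) (hc : 0 < c) :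
    x * b - c * (exp x - 1) ≤ b * log (b / c) - b + c := by
  rcases hb.eq_or_lt with rfl | hb
  · simp only [mul_zero, zero_mul, zero_sub]
    nlinarith [exp_pos x]
  · have h := add_one_le_exp (x - log (b / c))
    rw [exp_sub, exp_log (div_pos hb hc), div_div_eq_mul_div] at h
    have h' := mul_le_mul_of_nonneg_left h hb.le
    rw [mul_div_cancel₀ _ hb.ne'] at h'
    nlinarith

@[simp]
theorem klTerm_zero_zero : klTerm 0 0 = 0 := by
  simp [klTerm]

theorem klTerm_of_ne_zero (a : ℝ≥0) {b : ℝ≥0} (hb : b ≠ 0) :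
    klTerm a b = ((a * log (a / b) - a + b : ℝ) : EReal) := by
  unfold klTerm
  split_ifs with ha <;> simp [ha]

theorem coe_mul_sub_exp_le_klTerm (x : ℝ) (b c : ℝ≥0) :
    ((x * b - c * (exp x - 1) : ℝ) : EReal) ≤ klTerm b c := by
  rcases eq_or_ne c 0 with rfl | hc
  · rcases eq_or_ne b 0 with rfl | hb
    · simp
    · simp [klTerm, hb]
  · rw [klTerm_of_ne_zero b hc, EReal.coe_le_coe_iff]
    exact mul_sub_exp_le_kl x b.coe_nonneg (NNReal.coe_pos.2 (pos_iff_ne_zero.2 hc))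

theorem klTerm_eq_of_coe_eq_mul_exp {x : ℝ} {b c : ℝ≥0} (hb : (b : ℝ) = c * exp x) :
    klTerm b c = ((x * b - c * (exp x - 1) : ℝ) : EReal) := by
  rcases eq_or_ne c 0 with rfl | hc
  · obtain rfl : b = 0 := by exact_mod_cast hb.trans (zero_mul _)
    simp
  · rw [klTerm_of_ne_zero _ hc, hb, mul_div_cancel_left₀ _ (NNReal.coe_ne_zero.2 hc), log_exp]
    ring_nf

section SoftBranching

variable {ι : Type*} [Fintype ι]

noncomputable def softBranchingObjective (κ : ℝ) (g : ι → ℝ≥0) (u v : ι → ℝ)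
    (α β : ι → ℝ≥0) : EReal :=
  (((∑ i, u i * (α i : ℝ)) + ∑ i, v i * (β i : ℝ) : ℝ) : EReal)
    - (κ : EReal) * ∑ i, klTerm (β i) (g i * α i)

/-- The objective with each KL term replaced by its minorant from `coe_mul_sub_exp_le_klTerm`. -/
theorem sum_mul_add_sum_mul_sub_eq {κ : ℝ} (hκ : κ ≠ 0) (g : ι → ℝ≥0) (u v : ι → ℝ)
    (α β : ι → ℝ≥0) :
    (∑ i, u i * (α i : ℝ)) + (∑ i, v i * (β i : ℝ))
        - κ * ∑ i, (v i / κ * β i - (g i * α i : ℝ≥0) * (exp (v i / κ) - 1))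
      = ∑ i, (α i : ℝ) * (u i - κ * g i * (1 - exp (v i / κ))) := by
  rw [Finset.mul_sum, ← Finset.sum_add_distrib, ← Finset.sum_sub_distrib]
  refine Finset.sum_congr rfl fun i _ => ?_
  push_cast
  field_simp
  ring

theorem softBranchingObjective_le {κ : ℝ} (hκ : 0 < κ) (g : ι → ℝ≥0) (u v : ι → ℝ)
    (α β : ι → ℝ≥0) :
    softBranchingObjective κ g u v α β
      ≤ ((∑ i, (α i : ℝ) * (u i - κ * g i * (1 - exp (v i / κ))) : ℝ) : EReal) := by
  rw [← sum_mul_add_sum_mul_sub_eq hκ.ne' g u v α β, EReal.coe_sub, EReal.coe_mul,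
    EReal.coe_finset_sum]
  exact EReal.sub_le_sub le_rfl <| mul_le_mul_of_nonneg_left
    (Finset.sum_le_sum fun i _ => coe_mul_sub_exp_le_klTerm _ _ _) (EReal.coe_nonneg.2 hκ.le)

theorem softBranchingObjective_mul_exp {κ : ℝ} (hκ : κ ≠ 0) (g : ι → ℝ≥0) (u v : ι → ℝ)
    (α : ι → ℝ≥0) :
    softBranchingObjective κ g u v α (fun i => (g i * α i * exp (v i / κ)).toNNReal)
      = ((∑ i, (α i : ℝ) * (u i - κ * g i * (1 - exp (v i / κ))) : ℝ) : EReal) := by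
  rw [← sum_mul_add_sum_mul_sub_eq hκ g u v α, EReal.coe_sub, EReal.coe_mul,
    EReal.coe_finset_sum, softBranchingObjective]
  congr 2
  refine Finset.sum_congr rfl fun i _ => klTerm_eq_of_coe_eq_mul_exp ?_
  rw [Real.coe_toNNReal _ (by positivity), NNReal.coe_mul]

theorem iSup_coe_sum_mul_eq (δ : ι → ℝ) :
    (⨆ α : ι → ℝ≥0, ((∑ i, (α i : ℝ) * δ i : ℝ) : EReal))
      = if ∀ i, δ i ≤ 0 then 0 else ⊤ := by
  split_ifs with hδ
  · refine le_antisymm (iSup_le fun α => EReal.coe_nonpos.2 ?_) (le_iSup_of_le 0 (by simp))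
    exact Finset.sum_nonpos fun i _ => mul_nonpos_of_nonneg_of_nonpos (α i).coe_nonneg (hδ i)
  · push Not at hδ
    obtain ⟨i, hi⟩ := hδ
    refine (EReal.eq_top_iff_forall_lt _).2 fun M => ?_
    refine lt_of_lt_of_le ?_ (le_iSup _ (Pi.single i ((|M| + 1) / δ i).toNNReal))
    rw [EReal.coe_lt_coe_iff, Finset.sum_eq_single i (fun j _ hj => by simp [hj]) (by simp),
      Pi.single_eq_same, Real.coe_toNNReal _ (by positivity), div_mul_cancel₀ _ hi.ne']
    linarith [le_abs_self M]

theorem iSup_softBranchingObjective {κ : ℝ} (hκ : 0 < κ) (g : ι → ℝ≥0) (u v : ι → ℝ) :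
    (⨆ (α : ι → ℝ≥0) (β : ι → ℝ≥0), softBranchingObjective κ g u v α β)
      = if ∀ i, u i ≤ κ * (g i : ℝ) * (1 - exp (v i / κ)) then 0 else ⊤ := by
  have hreduce : (⨆ (α : ι → ℝ≥0) (β : ι → ℝ≥0), softBranchingObjective κ g u v α β)
      = ⨆ α : ι → ℝ≥0, ((∑ i, (α i : ℝ) * (u i - κ * g i * (1 - exp (v i / κ))) : ℝ) : EReal) :=
    le_antisymm
      (iSup₂_le fun α β => (softBranchingObjective_le hκ g u v α β).trans (le_iSup_of_le α le_rfl))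
      (iSup_mono fun α =>
        (softBranchingObjective_mul_exp hκ.ne' g u v α).symm.le.trans (le_iSup_of_le _ le_rfl))
  simp only [hreduce, iSup_coe_sum_mul_eq, sub_nonpos]

end SoftBranching

theorem softBranching_conjugate_general (n : ℕ) (κ : ℝ) (hκ : 0 < κ)
    (g : Fin n → ℝ≥0) (u v : Fin n → ℝ) :
    (⨆ (α : Fin n → ℝ≥0) (β : Fin n → ℝ≥0),
        ((((∑ i, u i * (α i : ℝ)) + ∑ i, v i * (β i : ℝ) : ℝ) : EReal)
          - (κ : EReal) * ∑ i, klTerm (β i) (g i * α i)))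
    = if ∀ i, u i ≤ κ * (g i : ℝ) * (1 - Real.exp (v i / κ)) then 0 else ⊤ :=
  (iSup_softBranchingObjective hκ g u v).trans (by congr)

/-- With `G(α, β) = κ·KL(β | g⊙α)` for `κ > 0` and `g ∈ (0,∞)ⁿ`, the convex conjugate
`sup {⟨u,α⟩ + ⟨v,β⟩ − G(α,β)}` equals `0` if `uᵢ ≤ κ·gᵢ·(1 − exp(vᵢ/κ))` for every `i`,
and `+∞` otherwise. -/
theorem softBranching_conjugate (n : ℕ) (hn : 1 ≤ n) (κ : ℝ) (hκ : 0 < κ)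
    (g : Fin n → ℝ≥0) (hg : ∀ i, 0 < g i) (u v : Fin n → ℝ) :
    (⨆ (α : Fin n → ℝ≥0) (β : Fin n → ℝ≥0),
        ((((∑ i, u i * (α i : ℝ)) + ∑ i, v i * (β i : ℝ) : ℝ) : EReal)
          - (κ : EReal) * ∑ i, klTerm (β i) (g i * α i)))
    = if ∀ i, u i ≤ κ * (g i : ℝ) * (1 - Real.exp (v i / κ)) then 0 else ⊤ :=
  softBranching_conjugate_general n κ hκ g u v
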